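/- Let Q₁, Q₀, R₁, R₀ : U × (ℝ^d ∖ {0}) → ℂ^{d×d} be smooth matrix-valued functions. Define the two leading components of the composed symbol by C₁ := Q₁ R₁ (pointwise matrix product) and C₀ := Q₁ R₀ + Q₀ R₁ − i Σ_γ (∂Q₁/∂ξ_γ)(∂R₁/∂x^γ). Then, pointwise on U × (ℝ^d ∖ {0}), Sub(C₁, C₀) = Q₁ · Sub(R₁, R₀) + Sub(Q₁, Q₀) · R₁ + (i/2) {{Q₁, R₁}}. (This is the composition formula for subprincipal symbols of pseudodifferential operators acting on 1-forms, Theorem 3.6 of the paper, expressed at the level of the two leading symbol components.) -/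

import Mathlib

/-!
Everything is a matrix identity. With `H_γ := (Γ^α{}_{γμ})_{μα}`, formula (3.5) reads
`Sub(P₁,P₀) = P₀ + (i/2)Σ_γ(∂_{x^γ}∂_{ξ_γ}P₁ + (tr H_γ) ∂_{ξ_γ}P₁ − H_γ ∂_{ξ_γ}P₁ − ∂_{ξ_γ}P₁ H_γ)`
and formula (3.12) reads
`{{Q,R}} = Σ_γ ((∂_{x^γ}Q − H_γ Q + Q H_γ) ∂_{ξ_γ}R − ∂_{ξ_γ}Q (∂_{x^γ}R − H_γ R + R H_γ))`.
The Leibniz rule expands the first and second derivatives of `Q₁R₁`. The correction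
`−i Σ_γ ∂_{ξ_γ}Q₁ ∂_{x^γ}R₁` in `C₀` turns the symmetric mixed term `∂_ξQ₁ ∂_xR₁ + ∂_xQ₁ ∂_ξR₁`
into the antisymmetric one of the bracket, and the Christoffel terms acting on the inner index
of `Q₁R₁` (in `Q₁ Sub(R₁,R₀)` and `Sub(Q₁,Q₀) R₁`) cancel against those of the bracket. What is
left is an identity in an arbitrary ℂ-algebra.
-/

noncomputable section

/-- Partial derivative in the base variable: `∂f/∂x^γ` at `p = (x, ξ)`. -/
def pdx {d : ℕ} (γ : Fin d) (f : (Fin d → ℝ) × (Fin d → ℝ) → ℂ)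
    (p : (Fin d → ℝ) × (Fin d → ℝ)) : ℂ :=
  fderiv ℝ f p (Pi.single γ 1, 0)

/-- Partial derivative in the momentum variable: `∂f/∂ξ_γ` at `p = (x, ξ)`. -/
def pdxi {d : ℕ} (γ : Fin d) (f : (Fin d → ℝ) × (Fin d → ℝ) → ℂ)
    (p : (Fin d → ℝ) × (Fin d → ℝ)) : ℂ :=
  fderiv ℝ f p (0, Pi.single γ 1)

/-- Partial derivative `∂f/∂x^β` of a scalar function on `ℝ^d`. -/
def pdX {d : ℕ} (β : Fin d) (f : (Fin d → ℝ) → ℝ) (x : Fin d → ℝ) : ℝ :=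
  fderiv ℝ f x (Pi.single β 1)

/-- The Christoffel symbols
`Γ^α{}_{βγ} := (1/2) Σ_δ g^{αδ}(∂_β g_{δγ} + ∂_γ g_{δβ} − ∂_δ g_{βγ})`. -/
def christoffel {d : ℕ} (g : (Fin d → ℝ) → Fin d → Fin d → ℝ) (α β γ : Fin d)
    (x : Fin d → ℝ) : ℝ :=
  (1 / 2) * ∑ δ, (Matrix.of (g x))⁻¹ α δ *
    (pdX β (fun y => g y δ γ) x + pdX γ (fun y => g y δ β) x - pdX δ (fun y => g y β γ) x)

/-- The subprincipal symbol `Sub(P₁,P₀)` of a pseudodifferential operator acting on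
1-forms with two leading symbol components `P₁, P₀` (formula (3.5) of the paper). -/
def subSymb {d : ℕ} (g : (Fin d → ℝ) → Fin d → Fin d → ℝ)
    (P₁ P₀ : (Fin d → ℝ) × (Fin d → ℝ) → Matrix (Fin d) (Fin d) ℂ)
    (p : (Fin d → ℝ) × (Fin d → ℝ)) (μ ν : Fin d) : ℂ :=
  P₀ p μ ν
    + Complex.I / 2 * ∑ γ, pdx γ (fun q => pdxi γ (fun r => P₁ r μ ν) q) p
    + Complex.I / 2 * ∑ γ,
        ((∑ α, (christoffel g α γ α p.1 : ℂ)) * pdxi γ (fun q => P₁ q μ ν) p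
          - (∑ α, (christoffel g α γ μ p.1 : ℂ) * pdxi γ (fun q => P₁ q α ν) p)
          - ∑ α, (christoffel g ν γ α p.1 : ℂ) * pdxi γ (fun q => P₁ q μ α) p)

/-- The generalised Poisson bracket `{{Q, R}}` (formula (3.12) of the paper). -/
def genPoisson {d : ℕ} (g : (Fin d → ℝ) → Fin d → Fin d → ℝ)
    (Q R : (Fin d → ℝ) × (Fin d → ℝ) → Matrix (Fin d) (Fin d) ℂ)
    (p : (Fin d → ℝ) × (Fin d → ℝ)) (α β : Fin d) : ℂ :=
  (∑ γ, ∑ κ,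
      (pdx γ (fun q => Q q α κ) p
          - (∑ α', (christoffel g α' γ α p.1 : ℂ) * Q p α' κ)
          + ∑ κ', (christoffel g κ γ κ' p.1 : ℂ) * Q p α κ') *
        pdxi γ (fun q => R q κ β) p)
    - ∑ γ, ∑ κ, pdxi γ (fun q => Q q α κ) p *
        (pdx γ (fun q => R q κ β) p
          - (∑ κ', (christoffel g κ' γ κ p.1 : ℂ) * R p κ' β)
          + ∑ β', (christoffel g β γ β' p.1 : ℂ) * R p κ β')

open Filter Topology

section EntrywiseFDeriv

variable (𝕜 : Type*) [NontriviallyNormedField 𝕜] {E : Type*} [NormedAddCommGroup E]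
  [NormedSpace 𝕜 E] {R : Type*} [NormedCommRing R] [NormedAlgebra 𝕜 R] {l m n : Type*}

def entrywiseFDeriv (v : E) (P : E → Matrix m n R) (p : E) : Matrix m n R :=
  Matrix.of fun a b => fderiv 𝕜 (fun q => P q a b) p v

variable {𝕜}

theorem entrywiseFDeriv_add {A B : E → Matrix m n R} {p : E}
    (hA : ∀ a b, DifferentiableAt 𝕜 (fun q => A q a b) p)
    (hB : ∀ a b, DifferentiableAt 𝕜 (fun q => B q a b) p) (v : E) :
    entrywiseFDeriv 𝕜 v (fun q => A q + B q) p
      = entrywiseFDeriv 𝕜 v A p + entrywiseFDeriv 𝕜 v B p := by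
  ext a b
  simp only [entrywiseFDeriv, Matrix.add_apply, Matrix.of_apply]
  rw [fderiv_fun_add (hA a b) (hB a b)]
  rfl

theorem entrywiseFDeriv_mul [Fintype m] {A : E → Matrix l m R} {B : E → Matrix m n R} {p : E}
    (hA : ∀ a b, DifferentiableAt 𝕜 (fun q => A q a b) p)
    (hB : ∀ a b, DifferentiableAt 𝕜 (fun q => B q a b) p) (v : E) :
    entrywiseFDeriv 𝕜 v (fun q => A q * B q) p
      = entrywiseFDeriv 𝕜 v A p * B p + A p * entrywiseFDeriv 𝕜 v B p := by
  ext a b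
  simp only [entrywiseFDeriv, Matrix.add_apply, Matrix.mul_apply, Matrix.of_apply,
    ← Finset.sum_add_distrib]
  rw [fderiv_fun_sum (A := fun κ q => A q a κ * B q κ b) fun κ _ => (hA a κ).mul (hB κ b),
    sum_apply]
  refine Finset.sum_congr rfl fun κ _ => ?_
  rw [fderiv_fun_mul (hA a κ) (hB κ b)]
  simp only [add_apply, smul_apply, smul_eq_mul]
  ring

theorem Filter.EventuallyEq.entrywiseFDeriv_eq {P P' : E → Matrix m n R} {p : E}
    (h : P =ᶠ[𝓝 p] P') (v : E) : entrywiseFDeriv 𝕜 v P p = entrywiseFDeriv 𝕜 v P' p := by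
  ext a b
  have hab : (fun q => P q a b) =ᶠ[𝓝 p] fun q => P' q a b :=
    h.mono fun q hq => congrFun (congrFun hq a) b
  simp only [entrywiseFDeriv, Matrix.of_apply, hab.fderiv_eq]

theorem differentiableAt_mul_apply [Fintype m] {A : E → Matrix l m R} {B : E → Matrix m n R}
    {p : E} (hA : ∀ a b, DifferentiableAt 𝕜 (fun q => A q a b) p)
    (hB : ∀ a b, DifferentiableAt 𝕜 (fun q => B q a b) p) (a : l) (b : n) :
    DifferentiableAt 𝕜 (fun q => (A q * B q) a b) p := by
  simp only [Matrix.mul_apply]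
  fun_prop

theorem differentiableAt_entrywiseFDeriv {P : E → Matrix m n R} {p : E}
    (hP : ∀ a b, ContDiffAt 𝕜 2 (fun q => P q a b) p) (v : E) (a : m) (b : n) :
    DifferentiableAt 𝕜 (fun q => entrywiseFDeriv 𝕜 v P q a b) p :=
  (((hP a b).fderiv_right (m := 1) le_rfl).clm_apply contDiffAt_const).differentiableAt
    one_ne_zero

theorem entrywiseFDeriv_entrywiseFDeriv_mul [Fintype l] [Fintype m] [Fintype n]
    {A : E → Matrix l m R} {B : E → Matrix m n R} {p : E}
    (hA : ∀ a b, ContDiffAt 𝕜 2 (fun q => A q a b) p)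
    (hB : ∀ a b, ContDiffAt 𝕜 2 (fun q => B q a b) p) (v w : E) :
    entrywiseFDeriv 𝕜 w (entrywiseFDeriv 𝕜 v fun q => A q * B q) p
      = entrywiseFDeriv 𝕜 w (entrywiseFDeriv 𝕜 v A) p * B p
        + entrywiseFDeriv 𝕜 v A p * entrywiseFDeriv 𝕜 w B p
        + (entrywiseFDeriv 𝕜 w A p * entrywiseFDeriv 𝕜 v B p
          + A p * entrywiseFDeriv 𝕜 w (entrywiseFDeriv 𝕜 v B) p) := by
  have hA' : ∀ a b, DifferentiableAt 𝕜 (fun q => A q a b) p :=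
    fun a b => (hA a b).differentiableAt two_ne_zero
  have hB' : ∀ a b, DifferentiableAt 𝕜 (fun q => B q a b) p :=
    fun a b => (hB a b).differentiableAt two_ne_zero
  have hLeibniz : entrywiseFDeriv 𝕜 v (fun q => A q * B q) =ᶠ[𝓝 p]
      fun q => entrywiseFDeriv 𝕜 v A q * B q + A q * entrywiseFDeriv 𝕜 v B q := by
    have hA2 : ∀ᶠ q in 𝓝 p, ∀ a b, ContDiffAt 𝕜 2 (fun q => A q a b) q :=
      eventually_all.2 fun a => eventually_all.2 fun b => (hA a b).eventually (by simp)
    have hB2 : ∀ᶠ q in 𝓝 p, ∀ a b, ContDiffAt 𝕜 2 (fun q => B q a b) q :=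
      eventually_all.2 fun a => eventually_all.2 fun b => (hB a b).eventually (by simp)
    filter_upwards [hA2, hB2] with q hAq hBq
    exact entrywiseFDeriv_mul (fun a b => (hAq a b).differentiableAt two_ne_zero)
      (fun a b => (hBq a b).differentiableAt two_ne_zero) v
  have hAv := differentiableAt_entrywiseFDeriv hA v
  have hBv := differentiableAt_entrywiseFDeriv hB v
  rw [hLeibniz.entrywiseFDeriv_eq, entrywiseFDeriv_add (differentiableAt_mul_apply hAv hB')
      (differentiableAt_mul_apply hA' hBv),
    entrywiseFDeriv_mul hAv hB', entrywiseFDeriv_mul hA' hBv]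

end EntrywiseFDeriv

section MatrixForm

variable {d : ℕ}

def xUnit (γ : Fin d) : (Fin d → ℝ) × (Fin d → ℝ) := (Pi.single γ 1, 0)

def ξUnit (γ : Fin d) : (Fin d → ℝ) × (Fin d → ℝ) := (0, Pi.single γ 1)

def christoffelMatrix (g : (Fin d → ℝ) → Fin d → Fin d → ℝ) (γ : Fin d) (x : Fin d → ℝ) :
    Matrix (Fin d) (Fin d) ℂ :=
  Matrix.of fun μ α => (christoffel g α γ μ x : ℂ)

local notation "∂ₓ[" γ "]" => entrywiseFDeriv ℝ (xUnit γ)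

local notation "∂ξ[" γ "]" => entrywiseFDeriv ℝ (ξUnit γ)

theorem of_subSymb (g : (Fin d → ℝ) → Fin d → Fin d → ℝ)
    (P₁ P₀ : (Fin d → ℝ) × (Fin d → ℝ) → Matrix (Fin d) (Fin d) ℂ)
    (p : (Fin d → ℝ) × (Fin d → ℝ)) :
    Matrix.of (subSymb g P₁ P₀ p)
      = P₀ p + (Complex.I / 2) • ∑ γ, ∂ₓ[γ] (∂ξ[γ] P₁) p
        + (Complex.I / 2) • ∑ γ, ((christoffelMatrix g γ p.1).trace • ∂ξ[γ] P₁ p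
          - christoffelMatrix g γ p.1 * ∂ξ[γ] P₁ p - ∂ξ[γ] P₁ p * christoffelMatrix g γ p.1) := by
  ext μ ν
  simp [subSymb, entrywiseFDeriv, christoffelMatrix, Matrix.sum_apply, Matrix.mul_apply,
    Matrix.trace, xUnit, ξUnit, pdx, pdxi, mul_comm]

theorem of_genPoisson (g : (Fin d → ℝ) → Fin d → Fin d → ℝ)
    (Q R : (Fin d → ℝ) × (Fin d → ℝ) → Matrix (Fin d) (Fin d) ℂ)
    (p : (Fin d → ℝ) × (Fin d → ℝ)) :
    Matrix.of (genPoisson g Q R p)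
      = ∑ γ, ((∂ₓ[γ] Q p - christoffelMatrix g γ p.1 * Q p + Q p * christoffelMatrix g γ p.1)
            * ∂ξ[γ] R p
          - ∂ξ[γ] Q p
            * (∂ₓ[γ] R p - christoffelMatrix g γ p.1 * R p + R p * christoffelMatrix g γ p.1)) := by
  ext μ ν
  simp [genPoisson, entrywiseFDeriv, christoffelMatrix, Matrix.sum_apply, Matrix.mul_apply,
    xUnit, ξUnit, pdx, pdxi, mul_comm]

theorem subSymb_mul_identity {ι A : Type*} [Fintype ι] [Ring A] [Algebra ℂ A]
    (Q Q₀ R R₀ : A) (t : ι → ℂ) (H Qx Qξ Qxξ Rx Rξ Rxξ : ι → A) :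
    Q * R₀ + Q₀ * R + (-Complex.I) • ∑ γ, Qξ γ * Rx γ
        + (Complex.I / 2) • ∑ γ, (Qxξ γ * R + Qξ γ * Rx γ + (Qx γ * Rξ γ + Q * Rxξ γ))
        + (Complex.I / 2) • ∑ γ, (t γ • (Qξ γ * R + Q * Rξ γ) - H γ * (Qξ γ * R + Q * Rξ γ)
          - (Qξ γ * R + Q * Rξ γ) * H γ)
      = Q * (R₀ + (Complex.I / 2) • ∑ γ, Rxξ γ
          + (Complex.I / 2) • ∑ γ, (t γ • Rξ γ - H γ * Rξ γ - Rξ γ * H γ))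
        + (Q₀ + (Complex.I / 2) • ∑ γ, Qxξ γ
          + (Complex.I / 2) • ∑ γ, (t γ • Qξ γ - H γ * Qξ γ - Qξ γ * H γ)) * R
        + (Complex.I / 2) • ∑ γ, ((Qx γ - H γ * Q + Q * H γ) * Rξ γ
          - Qξ γ * (Rx γ - H γ * R + R * H γ)) := by
  simp only [mul_add, add_mul, mul_sub, sub_mul, mul_assoc, Finset.mul_sum, Finset.sum_mul,
    mul_smul_comm, smul_mul_assoc, Finset.sum_add_distrib, Finset.sum_sub_distrib, smul_add,
    smul_sub]
  module

theorem of_subSymb_mul {g : (Fin d → ℝ) → Fin d → Fin d → ℝ}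
    {Q₁ Q₀ R₁ R₀ C₀ : (Fin d → ℝ) × (Fin d → ℝ) → Matrix (Fin d) (Fin d) ℂ}
    {p : (Fin d → ℝ) × (Fin d → ℝ)}
    (hQ₁ : ∀ a b, ContDiffAt ℝ 2 (fun q => Q₁ q a b) p)
    (hR₁ : ∀ a b, ContDiffAt ℝ 2 (fun q => R₁ q a b) p)
    (hC₀ : C₀ p = Q₁ p * R₀ p + Q₀ p * R₁ p + (-Complex.I) • ∑ γ, ∂ξ[γ] Q₁ p * ∂ₓ[γ] R₁ p) :
    Matrix.of (subSymb g (fun q => Q₁ q * R₁ q) C₀ p)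
      = Q₁ p * Matrix.of (subSymb g R₁ R₀ p) + Matrix.of (subSymb g Q₁ Q₀ p) * R₁ p
        + (Complex.I / 2) • Matrix.of (genPoisson g Q₁ R₁ p) := by
  simp only [of_subSymb, of_genPoisson, hC₀, entrywiseFDeriv_entrywiseFDeriv_mul hQ₁ hR₁,
    entrywiseFDeriv_mul (fun a b => (hQ₁ a b).differentiableAt two_ne_zero)
      (fun a b => (hR₁ a b).differentiableAt two_ne_zero)]
  exact subSymb_mul_identity ..

end MatrixForm

theorem subprincipal_symbol_of_composition_general {d : ℕ}
    (U : Set (Fin d → ℝ)) (hU : IsOpen U)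
    (g : (Fin d → ℝ) → Fin d → Fin d → ℝ)
    (Q₁ Q₀ R₁ R₀ : (Fin d → ℝ) × (Fin d → ℝ) → Matrix (Fin d) (Fin d) ℂ)
    (hQ₁ : ∀ μ ν, ContDiffOn ℝ (⊤ : ℕ∞) (fun p => Q₁ p μ ν)
      (U ×ˢ {ξ : Fin d → ℝ | ξ ≠ 0}))
    (hR₁ : ∀ μ ν, ContDiffOn ℝ (⊤ : ℕ∞) (fun p => R₁ p μ ν)
      (U ×ˢ {ξ : Fin d → ℝ | ξ ≠ 0})) :
    ∀ p ∈ U ×ˢ {ξ : Fin d → ℝ | ξ ≠ 0}, ∀ μ ν : Fin d,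
      subSymb g (fun q => Q₁ q * R₁ q)
        (fun q => Q₁ q * R₀ q + Q₀ q * R₁ q
          + Matrix.of fun μ' ν' => -Complex.I * ∑ γ, ∑ κ,
              pdxi γ (fun r => Q₁ r μ' κ) q * pdx γ (fun r => R₁ r κ ν') q)
        p μ ν
      = (∑ κ, Q₁ p μ κ * subSymb g R₁ R₀ p κ ν)
        + (∑ κ, subSymb g Q₁ Q₀ p μ κ * R₁ p κ ν)
        + Complex.I / 2 * genPoisson g Q₁ R₁ p μ ν := by
  intro p hp μ ν
  have hS : U ×ˢ {ξ : Fin d → ℝ | ξ ≠ 0} ∈ 𝓝 p := (hU.prod isOpen_ne).mem_nhds hp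
  have hQ : ∀ a b, ContDiffAt ℝ 2 (fun q => Q₁ q a b) p :=
    fun a b => ((hQ₁ a b).contDiffAt hS).of_le (WithTop.coe_le_coe.2 le_top)
  have hR : ∀ a b, ContDiffAt ℝ 2 (fun q => R₁ q a b) p :=
    fun a b => ((hR₁ a b).contDiffAt hS).of_le (WithTop.coe_le_coe.2 le_top)
  have hC₀ : (Matrix.of fun μ' ν' => -Complex.I * ∑ γ, ∑ κ,
        pdxi γ (fun r => Q₁ r μ' κ) p * pdx γ (fun r => R₁ r κ ν') p)
      = (-Complex.I) • ∑ γ,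
          entrywiseFDeriv ℝ (ξUnit γ) Q₁ p * entrywiseFDeriv ℝ (xUnit γ) R₁ p := by
    ext
    simp [entrywiseFDeriv, Matrix.sum_apply, Matrix.mul_apply, xUnit, ξUnit, pdx, pdxi]
  rw [← Matrix.of_apply (subSymb g (fun q => Q₁ q * R₁ q) _ p) μ ν,
    of_subSymb_mul (R₀ := R₀) (Q₀ := Q₀) hQ hR (congrArg (_ + ·) hC₀)]
  simp [Matrix.mul_apply]

/-- **Theorem 3.6 of the paper** (composition formula for subprincipal symbols of
pseudodifferential operators acting on 1-forms, at the level of the two leading symbol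
components): with `C₁ := Q₁R₁` and
`C₀ := Q₁R₀ + Q₀R₁ − i Σ_γ (∂Q₁/∂ξ_γ)(∂R₁/∂x^γ)`, one has
`Sub(C₁,C₀) = Q₁ Sub(R₁,R₀) + Sub(Q₁,Q₀) R₁ + (i/2) {{Q₁,R₁}}` pointwise on
`U × (ℝ^d ∖ {0})`. -/
theorem subprincipal_symbol_of_composition {d : ℕ} (hd : 1 ≤ d)
    (U : Set (Fin d → ℝ)) (hU : IsOpen U)
    (g : (Fin d → ℝ) → Fin d → Fin d → ℝ)
    (hg : ∀ α β, ContDiffOn ℝ (⊤ : ℕ∞) (fun x => g x α β) U)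
    (hgsym : ∀ x ∈ U, ∀ α β, g x α β = g x β α)
    (hgpos : ∀ x ∈ U, (Matrix.of (g x)).PosDef)
    (Q₁ Q₀ R₁ R₀ : (Fin d → ℝ) × (Fin d → ℝ) → Matrix (Fin d) (Fin d) ℂ)
    (hQ₁ : ∀ μ ν, ContDiffOn ℝ (⊤ : ℕ∞) (fun p => Q₁ p μ ν)
      (U ×ˢ {ξ : Fin d → ℝ | ξ ≠ 0}))
    (hQ₀ : ∀ μ ν, ContDiffOn ℝ (⊤ : ℕ∞) (fun p => Q₀ p μ ν)
      (U ×ˢ {ξ : Fin d → ℝ | ξ ≠ 0}))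
    (hR₁ : ∀ μ ν, ContDiffOn ℝ (⊤ : ℕ∞) (fun p => R₁ p μ ν)
      (U ×ˢ {ξ : Fin d → ℝ | ξ ≠ 0}))
    (hR₀ : ∀ μ ν, ContDiffOn ℝ (⊤ : ℕ∞) (fun p => R₀ p μ ν)
      (U ×ˢ {ξ : Fin d → ℝ | ξ ≠ 0})) :
    ∀ p ∈ U ×ˢ {ξ : Fin d → ℝ | ξ ≠ 0}, ∀ μ ν : Fin d,
      subSymb g (fun q => Q₁ q * R₁ q)
        (fun q => Q₁ q * R₀ q + Q₀ q * R₁ q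
          + Matrix.of fun μ' ν' => -Complex.I * ∑ γ, ∑ κ,
              pdxi γ (fun r => Q₁ r μ' κ) q * pdx γ (fun r => R₁ r κ ν') q)
        p μ ν
      = (∑ κ, Q₁ p μ κ * subSymb g R₁ R₀ p κ ν)
        + (∑ κ, subSymb g Q₁ Q₀ p μ κ * R₁ p κ ν)
        + Complex.I / 2 * genPoisson g Q₁ R₁ p μ ν :=
  subprincipal_symbol_of_composition_general U hU g Q₁ Q₀ R₁ R₀ hQ₁ hR₁
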